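/- arXiv:2605.11877 — 2 statements merged into one kernel-verified Lean document; each statement's English description precedes it below -/
import Mathlib

section
/- Let X have the inverse Gaussian distribution with parameters μ̂ = α > 0 and λ = α²/ε^{2p}, ε ∈ (0,1), p > 1. Then for every δ with 0 < δ < min{1, α/2}, P(X ≤ α - δ) ≤ (ε^p/δ)·√(α/(2π))·exp(-δ²/(2αε^{2p})) + (ε^p/√(8πα))·exp(-δ²/(2αε^{2p})). -/
open MeasureTheory Real Set

/-!
On `(0, b]` with `b < m`, the inverse Gaussian density `√(λ/(2πx³)) · E x`, where
`E x = exp (-λ(x - m)²/(2m²x))`, is at most `C · E' x` with `C = tailConstant m λ b`: the ratio of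
`√(λ/(2πx³))` to the logarithmic derivative `λ(m² - x²)/(2m²x²)` of `E` increases with `x`, so it
is largest at `x = b`. As `E` is positive and increasing on `(0, b]`, integrating gives the
Mills-ratio-type bound `P(X ≤ b) ≤ C · E b`, which takes the place of Shuster's formula. For
`m = α`, `λ = α²/ε^{2p}` and `b = α - δ` it remains to bound `C`, and to use `b ≤ α` in the
exponent.
-/

theorem lintegral_Ioc_ofReal_deriv_le {f f' : ℝ → ℝ} {a b : ℝ}
    (hf : ∀ x ∈ Ioc a b, HasDerivAt f (f' x) x) (hf' : ∀ x ∈ Ioc a b, 0 ≤ f' x)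
    (hf₀ : ∀ x ∈ Ioc a b, 0 ≤ f x) :
    ∫⁻ x in Ioc a b, ENNReal.ofReal (f' x) ≤ ENNReal.ofReal (f b) := by
  have hmono : MonotoneOn f (Ioc a b) := by
    refine monotoneOn_of_hasDerivWithinAt_nonneg (f' := f') (convex_Ioc a b)
      (fun x hx => (hf x hx).continuousAt.continuousWithinAt) (fun x hx => ?_) (fun x hx => ?_)
    all_goals rw [interior_Ioc] at hx
    · exact (hf x (Ioo_subset_Ioc_self hx)).hasDerivWithinAt
    · exact hf' x (Ioo_subset_Ioc_self hx)
  rw [lintegral_deriv_eq_volume_image_of_monotoneOn measurableSet_Ioc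
    (fun x hx => (hf x hx).hasDerivWithinAt) hmono]
  calc volume (f '' Ioc a b) ≤ volume (Icc 0 (f b)) := by
        refine measure_mono ?_
        rintro _ ⟨x, hx, rfl⟩
        exact ⟨hf₀ x hx, hmono hx (right_mem_Ioc.2 (hx.1.trans_le hx.2)) hx.2⟩
    _ = ENNReal.ofReal (f b) := by rw [Real.volume_Icc, sub_zero]

namespace InverseGaussian

noncomputable def density (m l x : ℝ) : ℝ :=
  √(l / (2 * π * x ^ 3)) * exp (-(l * (x - m) ^ 2) / (2 * m ^ 2 * x))

theorem hasDerivAt_exponent (l : ℝ) {m x : ℝ} (hm : m ≠ 0) (hx : x ≠ 0) :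
    HasDerivAt (fun y => -(l * (y - m) ^ 2) / (2 * m ^ 2 * y))
      (l * (m ^ 2 - x ^ 2) / (2 * m ^ 2 * x ^ 2)) x := by
  have hnum : HasDerivAt (fun y => -(l * (y - m) ^ 2)) (-(l * (2 * (x - m)))) x := by
    simpa using ((((hasDerivAt_id' x).sub_const m).fun_pow 2).const_mul l).fun_neg
  have hden : HasDerivAt (fun y => 2 * m ^ 2 * y) (2 * m ^ 2) x := by
    simpa using (hasDerivAt_id' x).const_mul (2 * m ^ 2)
  refine (hnum.fun_div hden (by positivity)).congr_deriv ?_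
  field_simp
  ring

noncomputable def tailConstant (m l b : ℝ) : ℝ :=
  2 * m ^ 2 * √b / (√(2 * π * l) * (m ^ 2 - b ^ 2))

theorem sqrt_le_tailConstant_mul {l m b x : ℝ} (hl : 0 < l) (hx : 0 < x) (hxb : x ≤ b)
    (hbm : b < m) :
    √(l / (2 * π * x ^ 3)) ≤
      tailConstant m l b * (l * (m ^ 2 - x ^ 2) / (2 * m ^ 2 * x ^ 2)) := by
  have hb : 0 < b := hx.trans_le hxb
  have hm : 0 < m := hb.trans hbm
  have hmb : 0 < m ^ 2 - b ^ 2 := by nlinarith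
  have hmx : m ^ 2 - b ^ 2 ≤ m ^ 2 - x ^ 2 := by nlinarith
  have key : x * (m ^ 2 - b ^ 2) ^ 2 ≤ b * (m ^ 2 - x ^ 2) ^ 2 :=
    mul_le_mul hxb (pow_le_pow_left₀ hmb.le hmx 2) (sq_nonneg _) hb.le
  have hsq : (tailConstant m l b * (l * (m ^ 2 - x ^ 2) / (2 * m ^ 2 * x ^ 2))) ^ 2
      = l / (2 * π * x ^ 3) * (b * (m ^ 2 - x ^ 2) ^ 2 / (x * (m ^ 2 - b ^ 2) ^ 2)) := by
    simp only [tailConstant, mul_pow, div_pow, sq_sqrt hb.le,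
      sq_sqrt (by positivity : 0 ≤ 2 * π * l)]
    field_simp
  rw [Real.sqrt_le_iff, hsq]
  exact ⟨mul_nonneg (div_nonneg (by positivity) (mul_nonneg (by positivity) hmb.le))
      (div_nonneg (mul_nonneg hl.le (by linarith)) (by positivity)),
    le_mul_of_one_le_right (by positivity) ((one_le_div (by positivity)).2 key)⟩

theorem lintegral_density_Ioc_le {m l b : ℝ} (hl : 0 < l) (hb : 0 < b) (hbm : b < m) :
    ∫⁻ x in Ioc 0 b, ENNReal.ofReal (density m l x) ≤
      ENNReal.ofReal (tailConstant m l b * exp (-(l * (b - m) ^ 2) / (2 * m ^ 2 * b))) := by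
  have hm : m ≠ 0 := (hb.trans hbm).ne'
  have hC : 0 ≤ tailConstant m l b := by
    have : 0 ≤ m ^ 2 - b ^ 2 := by nlinarith
    unfold tailConstant; positivity
  set E : ℝ → ℝ := fun x => exp (-(l * (x - m) ^ 2) / (2 * m ^ 2 * x))
  set E' : ℝ → ℝ := fun x => E x * (l * (m ^ 2 - x ^ 2) / (2 * m ^ 2 * x ^ 2))
  have hE : ∀ x ∈ Ioc 0 b, HasDerivAt E (E' x) x := fun x hx =>
    (hasDerivAt_exponent l hm hx.1.ne').exp
  have hE' : ∀ x ∈ Ioc 0 b, 0 ≤ E' x := fun x hx => by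
    have : 0 ≤ m ^ 2 - x ^ 2 := by nlinarith [hx.1, hx.2]
    positivity
  calc ∫⁻ x in Ioc 0 b, ENNReal.ofReal (density m l x)
      ≤ ∫⁻ x in Ioc 0 b, ENNReal.ofReal (tailConstant m l b) * ENNReal.ofReal (E' x) := by
        refine setLIntegral_mono (by fun_prop) fun x hx => ?_
        rw [← ENNReal.ofReal_mul hC]
        refine ENNReal.ofReal_le_ofReal ?_
        calc density m l x
            ≤ tailConstant m l b * (l * (m ^ 2 - x ^ 2) / (2 * m ^ 2 * x ^ 2)) * E x :=
              mul_le_mul_of_nonneg_right (sqrt_le_tailConstant_mul hl hx.1 hx.2 hbm) (exp_nonneg _)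
          _ = tailConstant m l b * E' x := by ring
    _ = ENNReal.ofReal (tailConstant m l b) * ∫⁻ x in Ioc 0 b, ENNReal.ofReal (E' x) :=
        lintegral_const_mul' _ _ ENNReal.ofReal_ne_top
    _ ≤ ENNReal.ofReal (tailConstant m l b) * ENNReal.ofReal (E b) := by
        gcongr
        exact lintegral_Ioc_ofReal_deriv_le hE hE' fun x _ => (exp_pos _).le
    _ = ENNReal.ofReal (tailConstant m l b * E b) := (ENNReal.ofReal_mul hC).symm

theorem tailConstant_le {α σ δ : ℝ} (hα : 0 < α) (hσ : 0 < σ) (hδ : 0 < δ) (hδα : δ < α) :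
    tailConstant α (α ^ 2 / σ ^ 2) (α - δ) ≤ σ / δ * √(α / (2 * π)) + σ / √(8 * π * α) := by
  have h2αδ : 0 < 2 * α - δ := by linarith
  have hrq : 4 * α * (√α * √(α - δ)) ≤ 4 * α ^ 2 - δ ^ 2 := by
    have hsq : (√α * √(α - δ)) ^ 2 = α * (α - δ) := by
      rw [mul_pow, sq_sqrt hα.le, sq_sqrt (by linarith)]
    rw [← pow_le_pow_iff_left₀ (by positivity) (by nlinarith) two_ne_zero, mul_pow, hsq]
    nlinarith [mul_pos (mul_pos (pow_pos hα 2) hδ) h2αδ, pow_pos hδ 4]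
  have hL : tailConstant α (α ^ 2 / σ ^ 2) (α - δ)
      = σ / (√(2 * π) * δ) * (2 * α * √(α - δ) / (2 * α - δ)) := by
    have : √(2 * π * (α ^ 2 / σ ^ 2)) = √(2 * π) * α / σ := by
      rw [sqrt_mul (by positivity), sqrt_div (by positivity), sqrt_sq hα.le, sqrt_sq hσ.le,
        mul_div_assoc]
    rw [tailConstant, this, show α ^ 2 - (α - δ) ^ 2 = δ * (2 * α - δ) by ring]
    field_simp
  have hR : σ / δ * √(α / (2 * π)) + σ / √(8 * π * α)
      = σ / (√(2 * π) * δ) * ((2 * α + δ) / (2 * √α)) := by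
    have h8 : √(8 * π * α) = 2 * √(2 * π) * √α := by
      rw [show 8 * π * α = 2 ^ 2 * (2 * π) * α by ring, sqrt_mul (by positivity),
        sqrt_mul (by positivity), sqrt_sq zero_le_two]
    rw [h8, sqrt_div hα.le]
    field_simp
    rw [sq_sqrt hα.le]
    ring
  rw [hL, hR]
  refine mul_le_mul_of_nonneg_left ?_ (by positivity)
  rw [div_le_div_iff₀ h2αδ (by positivity)]
  nlinarith

theorem exp_exponent_le {α σ δ : ℝ} (hα : 0 < α) (hσ : 0 < σ) (hδ : 0 < δ) (hδα : δ < α) :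
    exp (-(α ^ 2 / σ ^ 2 * (α - δ - α) ^ 2) / (2 * α ^ 2 * (α - δ))) ≤
      exp (-δ ^ 2 / (2 * α * σ ^ 2)) := by
  have hb : 0 < α - δ := by linarith
  rw [exp_le_exp, show -(α ^ 2 / σ ^ 2 * (α - δ - α) ^ 2) / (2 * α ^ 2 * (α - δ))
      = -δ ^ 2 / (2 * (α - δ) * σ ^ 2) by field_simp; ring, neg_div, neg_div, neg_le_neg_iff]
  exact div_le_div_of_nonneg_left (sq_nonneg δ) (by positivity) (by gcongr; linarith)

end InverseGaussian

theorem inverseGaussian_lower_tail_general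
    {Ω : Type*} [MeasurableSpace Ω] (μ : Measure Ω)
    (X : Ω → ℝ) (α ε p : ℝ) (hα : 0 < α)
    (hε0 : 0 < ε)
    (hdens : ∀ s : Set ℝ, MeasurableSet s →
      μ (X ⁻¹' s) = ∫⁻ x in s ∩ Set.Ioi 0,
        ENNReal.ofReal (Real.sqrt ((α^2 / ε ^ (2*p)) / (2 * Real.pi * x^3)) *
          Real.exp (-((α^2 / ε ^ (2*p)) * (x - α)^2) / (2 * α^2 * x))))
    (δ : ℝ) (hδ0 : 0 < δ) (hδ : δ < min 1 (α/2)) :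
    μ {ω | X ω ≤ α - δ}
      ≤ ENNReal.ofReal (ε ^ p / δ * Real.sqrt (α / (2 * Real.pi)) *
            Real.exp (-δ^2 / (2 * α * ε ^ (2*p)))
          + ε ^ p / Real.sqrt (8 * Real.pi * α) *
            Real.exp (-δ^2 / (2 * α * ε ^ (2*p)))) := by
  have hδα : δ < α := by linarith [hδ.trans_le (min_le_right _ _)]
  have hσ : 0 < ε ^ p := rpow_pos_of_pos hε0 p
  have hε2p : ε ^ (2 * p) = (ε ^ p) ^ 2 := by
    rw [mul_comm, rpow_mul hε0.le, rpow_two]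
  have hpre : {ω | X ω ≤ α - δ} = X ⁻¹' Iic (α - δ) := rfl
  rw [hpre, hdens _ measurableSet_Iic, inter_comm, Ioi_inter_Iic, hε2p]
  refine (InverseGaussian.lintegral_density_Ioc_le (by positivity) (by linarith)
    (by linarith)).trans (ENNReal.ofReal_le_ofReal ?_)
  rw [← add_mul]
  exact mul_le_mul (InverseGaussian.tailConstant_le hα hσ hδ0 hδα)
    (InverseGaussian.exp_exponent_le hα hσ hδ0 hδα) (exp_nonneg _) (by positivity)

/-- Lower-tail estimate for an inverse Gaussian random variable with parameters
`μ̂ = α`, `λ = α²/ε^{2p}`: for `0 < δ < min{1, α/2}`,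
`P(X ≤ α - δ) ≤ (ε^p/δ)√(α/(2π)) e^{-δ²/(2αε^{2p})} + (ε^p/√(8πα)) e^{-δ²/(2αε^{2p})}`. -/
theorem inverseGaussian_lower_tail
    {Ω : Type*} [MeasurableSpace Ω] (μ : Measure Ω) [IsProbabilityMeasure μ]
    (X : Ω → ℝ) (hX : Measurable X) (α ε p : ℝ) (hα : 0 < α)
    (hε0 : 0 < ε) (hε1 : ε < 1) (hp : 1 < p)
    (hdens : ∀ s : Set ℝ, MeasurableSet s →
      μ (X ⁻¹' s) = ∫⁻ x in s ∩ Set.Ioi 0,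
        ENNReal.ofReal (Real.sqrt ((α^2 / ε ^ (2*p)) / (2 * Real.pi * x^3)) *
          Real.exp (-((α^2 / ε ^ (2*p)) * (x - α)^2) / (2 * α^2 * x))))
    (δ : ℝ) (hδ0 : 0 < δ) (hδ : δ < min 1 (α/2)) :
    μ {ω | X ω ≤ α - δ}
      ≤ ENNReal.ofReal (ε ^ p / δ * Real.sqrt (α / (2 * Real.pi)) *
            Real.exp (-δ^2 / (2 * α * ε ^ (2*p)))
          + ε ^ p / Real.sqrt (8 * Real.pi * α) *
            Real.exp (-δ^2 / (2 * α * ε ^ (2*p)))) :=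
  inverseGaussian_lower_tail_general μ X α ε p hα hε0 hdens δ hδ0 hδ
end

section
/- Let X have the inverse Gaussian distribution with parameters μ̂ = α > 0 and λ = α²/ε^{2p}, ε ∈ (0,1), p > 1. Then there exists a constant K > 0, depending only on α, such that for all δ with 0 < δ < min{1, α/2}, P(|X - α| ≥ δ) ≤ K·(ε^p/δ)·exp(-δ²/(4αε^{2p})). -/
/-!
Write the density as `√(λ / (2πx³)) e^{-φ(x)}` with `φ(x) = λ(x - m)² / (2m²x)`, so that
`φ'(x) = λ(x² - m²) / (2m²x²)`. Where `|x - m| ≥ δ` we have `|x² - m²| = |x - m|(x + m) ≥ 2δ√(mx)`,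
hence the density is at most `(√(m³/λ)/δ) |φ'| e^{-φ}`, which is the derivative of `∓e^{-φ}` on
either side of `m`. Each tail therefore has mass at most `(√(m³/λ)/δ) e^{-φ(m ± δ)}`, and
`φ(m ± δ) ≥ λδ²/(4m³)` as `m ± δ ≤ 2m`. For `m = α`, `λ = α²/ε^{2p}` this is the claimed bound with
`K = 2√α`.
-/

open MeasureTheory Real Set Filter Topology

theorem integrableOn_Ioc_and_integral_eq_of_hasDerivAt_of_tendsto {g g' : ℝ → ℝ} {a b l : ℝ}
    (hab : a < b) (hderiv : ∀ x ∈ Ioc a b, HasDerivAt g (g' x) x)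
    (hpos : ∀ x ∈ Ioo a b, 0 ≤ g' x) (hg : Tendsto g (𝓝[>] a) (𝓝 l)) :
    IntegrableOn g' (Ioc a b) ∧ ∫ x in Ioc a b, g' x = g b - l := by
  classical
  -- redefining `g a` as the right limit `l` makes `g` continuous on `[a, b]`
  set G := Function.update g a l
  have hcont : ContinuousOn G (Icc a b) := by
    rw [continuousOn_update_iff, Icc_sdiff_left]
    exact ⟨fun x hx => (hderiv x hx).continuousAt.continuousWithinAt,
      fun _ => hg.mono_left (nhdsWithin_mono _ Ioc_subset_Ioi_self)⟩
  have hderivG : ∀ x ∈ Ioo a b, HasDerivAt G (g' x) x := fun x hx =>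
    (hderiv x (Ioo_subset_Ioc_self hx)).congr_of_eventuallyEq <| by
      filter_upwards [Ioi_mem_nhds hx.1] with y hy using Function.update_of_ne hy.ne' _ _
  have hint := intervalIntegral.integrableOn_deriv_of_nonneg hcont hderivG hpos
  refine ⟨hint, ?_⟩
  rw [← intervalIntegral.integral_of_le hab.le, intervalIntegral.integral_eq_sub_of_hasDerivAt_of_le
    hab.le hcont hderivG ((intervalIntegrable_iff_integrableOn_Ioc_of_le hab.le).2 hint)]
  simp [G, hab.ne']

theorem setLIntegral_ofReal_le_ofReal_setIntegral {α : Type*} [MeasurableSpace α] {μ : Measure α}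
    {f g : α → ℝ} {s : Set α} (hs : MeasurableSet s) (hg : IntegrableOn g s μ)
    (hg0 : ∀ x ∈ s, 0 ≤ g x) (hfg : ∀ x ∈ s, f x ≤ g x) :
    ∫⁻ x in s, ENNReal.ofReal (f x) ∂μ ≤ ENNReal.ofReal (∫ x in s, g x ∂μ) := by
  rw [ofReal_integral_eq_lintegral_ofReal hg ((ae_restrict_iff' hs).2 (.of_forall hg0))]
  exact setLIntegral_mono' hs fun x hx => ENNReal.ofReal_le_ofReal (hfg x hx)

/-- The inverse Gaussian density with mean `m` and shape `l` (the usual `λ`), for `x > 0`. -/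
noncomputable def inverseGaussianPDF (m l x : ℝ) : ℝ :=
  √(l / (2 * π * x ^ 3)) * exp (-(l * (x - m) ^ 2) / (2 * m ^ 2 * x))

noncomputable def inverseGaussianExponent (m l x : ℝ) : ℝ :=
  l * (x - m) ^ 2 / (2 * m ^ 2 * x)

noncomputable def inverseGaussianExponentDeriv (m l x : ℝ) : ℝ :=
  l * (x ^ 2 - m ^ 2) / (2 * m ^ 2 * x ^ 2)

section
variable {m l x : ℝ}

theorem inverseGaussianPDF_eq :
    inverseGaussianPDF m l x = √(l / (2 * π * x ^ 3)) * exp (-inverseGaussianExponent m l x) := by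
  rw [inverseGaussianPDF, inverseGaussianExponent, neg_div]

theorem inverseGaussianPDF_nonneg : 0 ≤ inverseGaussianPDF m l x := by
  unfold inverseGaussianPDF; positivity

theorem inverseGaussianExponentDeriv_nonneg (hl : 0 ≤ l) (hm : 0 ≤ m) (hx : m ≤ x) :
    0 ≤ inverseGaussianExponentDeriv m l x := by
  have : m ^ 2 ≤ x ^ 2 := by gcongr
  exact div_nonneg (mul_nonneg hl (by linarith)) (by positivity)

theorem inverseGaussianExponentDeriv_nonpos (hl : 0 ≤ l) (hx : 0 ≤ x) (hxm : x ≤ m) :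
    inverseGaussianExponentDeriv m l x ≤ 0 := by
  have : x ^ 2 ≤ m ^ 2 := by gcongr
  exact div_nonpos_of_nonpos_of_nonneg (mul_nonpos_of_nonneg_of_nonpos hl (by linarith))
    (by positivity)

theorem hasDerivAt_inverseGaussianExponent (hm : m ≠ 0) (hx : x ≠ 0) :
    HasDerivAt (inverseGaussianExponent m l) (inverseGaussianExponentDeriv m l x) x := by
  have hnum : HasDerivAt (fun y => l * (y - m) ^ 2) (l * (2 * (x - m))) x := by
    simpa using (((hasDerivAt_id x).sub_const m).fun_pow 2).const_mul l
  have hden : HasDerivAt (fun y => 2 * m ^ 2 * y) (2 * m ^ 2) x := by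
    simpa using (hasDerivAt_id x).const_mul (2 * m ^ 2)
  refine (hnum.fun_div hden (by positivity)).congr_deriv ?_
  rw [inverseGaussianExponentDeriv]
  field_simp
  ring

theorem tendsto_inverseGaussianExponent_atTop (hm : m ≠ 0) (hl : 0 < l) :
    Tendsto (inverseGaussianExponent m l) atTop atTop := by
  have hlin : Tendsto (fun x => l / (2 * m ^ 2) * (x - 2 * m)) atTop atTop :=
    (tendsto_atTop_add_const_right _ _ tendsto_id).const_mul_atTop (by positivity)
  refine tendsto_atTop_mono' _ ?_ hlin
  filter_upwards [eventually_gt_atTop 0] with x hx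
  rw [inverseGaussianExponent, div_mul_eq_mul_div, div_le_div_iff₀ (by positivity) (by positivity)]
  nlinarith [mul_nonneg hl.le (sq_nonneg (m ^ 2))]

theorem tendsto_inverseGaussianExponent_nhdsGT_zero (hm : m ≠ 0) (hl : 0 < l) :
    Tendsto (inverseGaussianExponent m l) (𝓝[>] 0) atTop := by
  have hcoef : Tendsto (fun x => l * (x - m) ^ 2 / (2 * m ^ 2)) (𝓝[>] 0) (𝓝 (l / 2)) :=
    ((Continuous.tendsto' (by fun_prop) 0 _ (by field_simp; ring)).mono_left nhdsWithin_le_nhds)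
  refine (hcoef.pos_mul_atTop (by positivity) tendsto_inv_nhdsGT_zero).congr fun x => ?_
  rw [inverseGaussianExponent]
  field_simp

theorem le_inverseGaussianExponent (hm : 0 < m) (hl : 0 ≤ l) (hx : 0 < x)
    (hx2 : x ≤ 2 * m) : l * (x - m) ^ 2 / (4 * m ^ 3) ≤ inverseGaussianExponent m l x :=
  div_le_div_of_nonneg_left (by positivity) (by positivity) (by nlinarith)

theorem inverseGaussianPDF_le (hm : 0 < m) (hl : 0 < l) {δ : ℝ} (hδ : 0 < δ) (hx : 0 < x)
    (hxδ : δ ≤ |x - m|) :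
    inverseGaussianPDF m l x ≤ √(m ^ 3 / l) / δ *
      (|inverseGaussianExponentDeriv m l x| * exp (-inverseGaussianExponent m l x)) := by
  rw [inverseGaussianPDF_eq, ← mul_assoc]
  gcongr
  have hδ2 : δ ^ 2 ≤ (x - m) ^ 2 := by simpa using pow_le_pow_left₀ hδ.le hxδ 2
  have key : 4 * m * x * δ ^ 2 ≤ (x ^ 2 - m ^ 2) ^ 2 := by
    rw [show (x ^ 2 - m ^ 2) ^ 2 = (x + m) ^ 2 * (x - m) ^ 2 by ring]
    exact mul_le_mul (by nlinarith [sq_nonneg (x - m)]) hδ2 (by positivity) (by positivity)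
  rw [sqrt_le_left (by positivity), mul_pow, div_pow, sq_sqrt (by positivity), sq_abs,
    inverseGaussianExponentDeriv,
    show m ^ 3 / l / δ ^ 2 * (l * (x ^ 2 - m ^ 2) / (2 * m ^ 2 * x ^ 2)) ^ 2
      = l * (x ^ 2 - m ^ 2) ^ 2 / (4 * m * δ ^ 2 * x ^ 4) by field_simp; ring,
    div_le_div_iff₀ (by positivity) (by positivity)]
  have hlx : 0 < l * x ^ 3 := by positivity
  calc l * (4 * m * δ ^ 2 * x ^ 4) = l * x ^ 3 * (4 * m * x * δ ^ 2) := by ring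
    _ ≤ l * x ^ 3 * (x ^ 2 - m ^ 2) ^ 2 := by gcongr
    _ ≤ l * x ^ 3 * (x ^ 2 - m ^ 2) ^ 2 * (2 * π) :=
        le_mul_of_one_le_right (by positivity) (by linarith [pi_gt_three])
    _ = l * (x ^ 2 - m ^ 2) ^ 2 * (2 * π * x ^ 3) := by ring

theorem inverseGaussian_upper_tail_integral (hm : 0 < m) (hl : 0 < l) {a : ℝ} (ha : m ≤ a) :
    IntegrableOn
        (fun x => inverseGaussianExponentDeriv m l x * exp (-inverseGaussianExponent m l x))
        (Ioi a) ∧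
      ∫ x in Ioi a, inverseGaussianExponentDeriv m l x * exp (-inverseGaussianExponent m l x)
        = exp (-inverseGaussianExponent m l a) := by
  have hderiv : ∀ x ∈ Ici a, HasDerivAt (fun y => -exp (-inverseGaussianExponent m l y))
      (inverseGaussianExponentDeriv m l x * exp (-inverseGaussianExponent m l x)) x := fun x hx =>
    ((hasDerivAt_inverseGaussianExponent hm.ne' (hm.trans_le (ha.trans hx)).ne').fun_neg.exp.fun_neg
      |>.congr_deriv (by ring))
  have hpos : ∀ x ∈ Ioi a, 0 ≤ inverseGaussianExponentDeriv m l x *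
      exp (-inverseGaussianExponent m l x) := fun x hx =>
    mul_nonneg (inverseGaussianExponentDeriv_nonneg hl.le hm.le (ha.trans hx.out.le)) (exp_nonneg _)
  have hlim : Tendsto (fun y => -exp (-inverseGaussianExponent m l y)) atTop (𝓝 0) := by
    simpa using (tendsto_exp_atBot.comp <| tendsto_neg_atTop_atBot.comp <|
      tendsto_inverseGaussianExponent_atTop hm.ne' hl).neg
  refine ⟨integrableOn_Ioi_deriv_of_nonneg' hderiv hpos hlim, ?_⟩
  rw [integral_Ioi_of_hasDerivAt_of_nonneg' hderiv hpos hlim, zero_sub, neg_neg]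

theorem inverseGaussian_lower_tail_integral (hm : 0 < m) (hl : 0 < l) {b : ℝ} (hb : 0 < b)
    (hbm : b ≤ m) :
    IntegrableOn
        (fun x => -inverseGaussianExponentDeriv m l x * exp (-inverseGaussianExponent m l x))
        (Ioc 0 b) ∧
      ∫ x in Ioc 0 b, -inverseGaussianExponentDeriv m l x * exp (-inverseGaussianExponent m l x)
        = exp (-inverseGaussianExponent m l b) := by
  have hderiv : ∀ x ∈ Ioc 0 b, HasDerivAt (fun y => exp (-inverseGaussianExponent m l y))
      (-inverseGaussianExponentDeriv m l x * exp (-inverseGaussianExponent m l x)) x := fun x hx =>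
    ((hasDerivAt_inverseGaussianExponent hm.ne' hx.1.ne').fun_neg.exp.congr_deriv (by ring))
  have hpos : ∀ x ∈ Ioo 0 b, 0 ≤ -inverseGaussianExponentDeriv m l x *
      exp (-inverseGaussianExponent m l x) := fun x hx =>
    mul_nonneg
      (neg_nonneg.2 (inverseGaussianExponentDeriv_nonpos hl.le hx.1.le (hx.2.le.trans hbm)))
      (exp_nonneg _)
  have hlim : Tendsto (fun y => exp (-inverseGaussianExponent m l y)) (𝓝[>] 0) (𝓝 0) :=
    tendsto_exp_atBot.comp <| tendsto_neg_atTop_atBot.comp <|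
      tendsto_inverseGaussianExponent_nhdsGT_zero hm.ne' hl
  simpa using integrableOn_Ioc_and_integral_eq_of_hasDerivAt_of_tendsto hb hderiv hpos hlim

theorem lintegral_Ici_inverseGaussianPDF_le (hm : 0 < m) (hl : 0 < l) {δ : ℝ} (hδ : 0 < δ) :
    ∫⁻ x in Ici (m + δ), ENNReal.ofReal (inverseGaussianPDF m l x)
      ≤ ENNReal.ofReal (√(m ^ 3 / l) / δ * exp (-inverseGaussianExponent m l (m + δ))) := by
  obtain ⟨hint, heq⟩ := inverseGaussian_upper_tail_integral hm hl (a := m + δ) (by linarith)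
  have hbound : ∀ x ∈ Ioi (m + δ), inverseGaussianPDF m l x ≤ √(m ^ 3 / l) / δ *
      (inverseGaussianExponentDeriv m l x * exp (-inverseGaussianExponent m l x)) := by
    intro x hx
    have hxm : m + δ ≤ x := hx.out.le
    rw [← abs_of_nonneg (inverseGaussianExponentDeriv_nonneg hl.le hm.le (by linarith))]
    exact inverseGaussianPDF_le hm hl hδ (by linarith) (by rw [abs_of_nonneg] <;> linarith)
  rw [← restrict_Ioi_eq_restrict_Ici, ← heq, ← integral_const_mul]
  exact setLIntegral_ofReal_le_ofReal_setIntegral measurableSet_Ioi (hint.const_mul _)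
    (fun x hx => (hbound x hx).trans' inverseGaussianPDF_nonneg) hbound

theorem lintegral_Ioc_inverseGaussianPDF_le (hm : 0 < m) (hl : 0 < l) {δ : ℝ} (hδ : 0 < δ)
    (hδm : δ < m) :
    ∫⁻ x in Ioc 0 (m - δ), ENNReal.ofReal (inverseGaussianPDF m l x)
      ≤ ENNReal.ofReal (√(m ^ 3 / l) / δ * exp (-inverseGaussianExponent m l (m - δ))) := by
  obtain ⟨hint, heq⟩ :=
    inverseGaussian_lower_tail_integral hm hl (b := m - δ) (by linarith) (by linarith)
  have hbound : ∀ x ∈ Ioc 0 (m - δ), inverseGaussianPDF m l x ≤ √(m ^ 3 / l) / δ *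
      (-inverseGaussianExponentDeriv m l x * exp (-inverseGaussianExponent m l x)) := by
    intro x hx
    rw [← abs_of_nonpos (inverseGaussianExponentDeriv_nonpos hl.le hx.1.le (by linarith [hx.2]))]
    exact inverseGaussianPDF_le hm hl hδ hx.1 (by rw [abs_of_nonpos] <;> linarith [hx.2])
  rw [← heq, ← integral_const_mul]
  exact setLIntegral_ofReal_le_ofReal_setIntegral measurableSet_Ioc (hint.const_mul _)
    (fun x hx => (hbound x hx).trans' inverseGaussianPDF_nonneg) hbound

theorem lintegral_inverseGaussianPDF_deviation_le (hm : 0 < m) (hl : 0 < l) {δ : ℝ} (hδ : 0 < δ)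
    (hδm : δ < m) :
    ∫⁻ x in {x | δ ≤ |x - m|} ∩ Ioi 0, ENNReal.ofReal (inverseGaussianPDF m l x)
      ≤ ENNReal.ofReal (2 * (√(m ^ 3 / l) / δ) * exp (-(l * δ ^ 2 / (4 * m ^ 3)))) := by
  have hsub : {x | δ ≤ |x - m|} ∩ Ioi 0 ⊆ Ioc 0 (m - δ) ∪ Ici (m + δ) := by
    rintro x ⟨hxδ, hx⟩
    rcases le_abs'.1 (show δ ≤ |x - m| from hxδ) with h | h
    · exact Or.inl ⟨hx, by linarith⟩
    · exact Or.inr (by simp only [mem_Ici]; linarith)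
  have hexp : ∀ x, 0 < x → x ≤ 2 * m → (x - m) ^ 2 = δ ^ 2 →
      l * δ ^ 2 / (4 * m ^ 3) ≤ inverseGaussianExponent m l x := fun x hx hx2 hxm =>
    hxm ▸ le_inverseGaussianExponent hm hl.le hx hx2
  set C := √(m ^ 3 / l) / δ
  calc ∫⁻ x in {x | δ ≤ |x - m|} ∩ Ioi 0, ENNReal.ofReal (inverseGaussianPDF m l x)
      ≤ ∫⁻ x in Ioc 0 (m - δ) ∪ Ici (m + δ), ENNReal.ofReal (inverseGaussianPDF m l x) :=
        lintegral_mono_set hsub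
    _ ≤ (∫⁻ x in Ioc 0 (m - δ), ENNReal.ofReal (inverseGaussianPDF m l x))
        + ∫⁻ x in Ici (m + δ), ENNReal.ofReal (inverseGaussianPDF m l x) :=
        lintegral_union_le _ _ _
    _ ≤ ENNReal.ofReal (C * exp (-inverseGaussianExponent m l (m - δ)))
        + ENNReal.ofReal (C * exp (-inverseGaussianExponent m l (m + δ))) :=
        add_le_add (lintegral_Ioc_inverseGaussianPDF_le hm hl hδ hδm)
          (lintegral_Ici_inverseGaussianPDF_le hm hl hδ)
    _ ≤ ENNReal.ofReal (C * exp (-(l * δ ^ 2 / (4 * m ^ 3))))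
        + ENNReal.ofReal (C * exp (-(l * δ ^ 2 / (4 * m ^ 3)))) := by
        gcongr <;> exact hexp _ (by linarith) (by linarith) (by ring)
    _ = ENNReal.ofReal (2 * C * exp (-(l * δ ^ 2 / (4 * m ^ 3)))) := by
        rw [← ENNReal.ofReal_add (by positivity) (by positivity)]
        ring_nf

end

/-- Two-sided deviation estimate for the inverse Gaussian first passage time:
there is `K > 0`, depending only on `α`, such that for all `ε ∈ (0,1)`, `p > 1`
and `0 < δ < min{1, α/2}`, `P(|X - α| ≥ δ) ≤ K (ε^p/δ) exp(-δ²/(4αε^{2p}))`. -/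
theorem inverseGaussian_deviation (α : ℝ) (hα : 0 < α) :
    ∃ K : ℝ, 0 < K ∧
      ∀ (Ω : Type) (mΩ : MeasurableSpace Ω) (μ : Measure Ω),
        IsProbabilityMeasure μ →
      ∀ (X : Ω → ℝ), Measurable X →
      ∀ (ε p : ℝ), 0 < ε → ε < 1 → 1 < p →
      (∀ s : Set ℝ, MeasurableSet s →
        μ (X ⁻¹' s) = ∫⁻ x in s ∩ Set.Ioi 0,
          ENNReal.ofReal (Real.sqrt ((α^2 / ε ^ (2*p)) / (2 * Real.pi * x^3)) *
            Real.exp (-((α^2 / ε ^ (2*p)) * (x - α)^2) / (2 * α^2 * x)))) →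
      ∀ δ : ℝ, 0 < δ → δ < min 1 (α/2) →
        μ {ω | δ ≤ |X ω - α|}
          ≤ ENNReal.ofReal (K * (ε ^ p / δ) *
              Real.exp (-δ^2 / (4 * α * ε ^ (2*p)))) := by
  refine ⟨2 * √α, by positivity, ?_⟩
  intro Ω _ μ _ X _ ε p hε _ _ hdens δ hδ hδα
  have hδα : δ < α := by linarith [min_le_right 1 (α / 2)]
  have hq : 0 < ε ^ p := rpow_pos_of_pos hε p
  have hθ : ε ^ (2 * p) = (ε ^ p) ^ 2 := by rw [two_mul, rpow_add hε, sq]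
  change μ (X ⁻¹' {x | δ ≤ |x - α|}) ≤ _
  rw [hdens _ (measurableSet_le measurable_const (by fun_prop))]
  refine (lintegral_inverseGaussianPDF_deviation_le hα (by positivity) hδ hδα).trans_eq ?_
  have hsqrt : √(α ^ 3 / (α ^ 2 / ε ^ (2 * p))) = √α * ε ^ p := by
    rw [show α ^ 3 / (α ^ 2 / ε ^ (2 * p)) = α * (ε ^ p) ^ 2 by rw [hθ]; field_simp,
      sqrt_mul hα.le, sqrt_sq hq.le]
  rw [hsqrt, hθ]
  congr 2
  · ring
  · field_simp
end
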